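/- arXiv:1004.0262 — 4 statements merged into one kernel-verified Lean document; each statement's English description precedes it below -/
import Mathlib

section
/- Let A be a C*-algebra, let a, b ∈ A be positive contractions (norm at most 1), let 0 < ε ≤ 1, and suppose a belongs to the hereditary subalgebra generated by (b - ε)₊, i.e., a ∈ closure((b-ε)₊ A (b-ε)₊). Then ‖ba - a‖ ≤ 2(1 - ε). -/
/-- `(b - ε)₊`: the functional calculus of `b` under `s ↦ max (s - ε) 0`. -/
noncomputable def cutDown {A : Type*} [NonUnitalCStarAlgebra A] (b : A) (ε : ℝ) : A :=
  cfcₙ (fun s : ℝ => max (s - ε) 0) b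

theorem norm_mul_sub_le_of_mem_hereditary {A : Type*} [NonUnitalCStarAlgebra A]
    [PartialOrder A] [StarOrderedRing A]
    (a b : A) (ha : 0 ≤ a) (hb : 0 ≤ b) (hna : ‖a‖ ≤ 1) (hnb : ‖b‖ ≤ 1)
    (ε : ℝ) (hε0 : 0 < ε) (hε1 : ε ≤ 1)
    (hmem : a ∈ closure {z : A | ∃ c : A, z = cutDown b ε * c * cutDown b ε}) :
    ‖b * a - a‖ ≤ 2 * (1 - ε) := by
  have hbsa : IsSelfAdjoint b := hb.isSelfAdjoint
  -- every element of the quasispectrum of `b` lies in `[0, 1]`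
  have hspec : ∀ x ∈ quasispectrum ℝ b, 0 ≤ x ∧ x ≤ 1 := by
    intro x hx
    refine ⟨quasispectrum_nonneg_of_nonneg b hb x hx, ?_⟩
    have := norm_apply_le_norm_cfcₙ (id : ℝ → ℝ) b hx
    rw [cfcₙ_id ℝ b] at this
    calc x ≤ |x| := le_abs_self x
    _ ≤ ‖b‖ := this
    _ ≤ 1 := hnb
  rcases hε1.eq_or_lt with hε | hε
  · -- case `ε = 1` : the cut-down is zero, hence `a = 0`
    have hcut : cutDown b ε = 0 := by
      rw [cutDown, ← cfcₙ_const_zero ℝ b]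
      apply cfcₙ_congr
      intro x hx
      have := (hspec x hx).2
      simp only
      rw [max_eq_right (by linarith [hε ▸ this])]
    have hsub : {z : A | ∃ c : A, z = cutDown b ε * c * cutDown b ε} ⊆ {0} := by
      rintro z ⟨c, rfl⟩
      simp [hcut]
    have ha0 : a = 0 := by
      have := closure_mono hsub hmem
      simpa using this
    simp only [ha0, mul_zero, sub_zero, norm_zero]
    nlinarith
  · -- case `ε < 1`
    set g : ℝ → ℝ := fun s => max (min (s / ε) (min 1 ((s - (2 * ε - 1)) / (1 - ε)))) 0 with hg
    have h1ε : (0:ℝ) < 1 - ε := by linarith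
    have hgc : Continuous g := by fun_prop
    have hg0 : g 0 = 0 := by
      simp only [hg, zero_div]
      rw [max_eq_right]
      exact le_trans (min_le_left _ _) le_rfl
    have hgnonneg : ∀ s, 0 ≤ g s := fun s => le_max_right _ _
    have hgone : ∀ s, ε ≤ s → g s = 1 := by
      intro s hs
      have h1 : min 1 ((s - (2 * ε - 1)) / (1 - ε)) = 1 := by
        rw [min_eq_left]
        rw [le_div_iff₀ h1ε]
        linarith
      have h2 : min (s / ε) (1:ℝ) = 1 := by
        rw [min_eq_right]
        rw [le_div_iff₀ hε0]
        linarith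
      simp only [hg]
      rw [h1, h2, max_eq_left zero_le_one]
    have hfc : ContinuousOn (fun s : ℝ => max (s - ε) 0) (quasispectrum ℝ b) := by fun_prop
    have hf0 : max (0 - ε) 0 = 0 := by
      rw [max_eq_right]; linarith
    -- `g(b) * (b - ε)₊ = (b - ε)₊`
    have hkey : cfcₙ g b * cutDown b ε = cutDown b ε := by
      rw [cutDown, ← cfcₙ_mul g _ b hgc.continuousOn hg0 hfc hf0]
      apply cfcₙ_congr
      intro x _
      simp only
      rcases le_or_gt x ε with hx | hx
      · rw [max_eq_right (by linarith), mul_zero]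
      · rw [hgone x hx.le, one_mul]
    -- `g(b) * a = a` by continuity
    have hga : cfcₙ g b * a = a := by
      have hclosed : IsClosed {z : A | cfcₙ g b * z = z} :=
        isClosed_eq (continuous_const.mul continuous_id) continuous_id
      have hsub : {z : A | ∃ c : A, z = cutDown b ε * c * cutDown b ε} ⊆
          {z : A | cfcₙ g b * z = z} := by
        rintro z ⟨c, rfl⟩
        show cfcₙ g b * (cutDown b ε * c * cutDown b ε) = _
        rw [← mul_assoc, ← mul_assoc, hkey]
      exact closure_minimal hsub hclosed hmem
    -- main estimate
    have hfactor : b * a - a = (b * cfcₙ g b - cfcₙ g b) * a := by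
      rw [sub_mul, mul_assoc, hga]
    have hnorm : ‖b * cfcₙ g b - cfcₙ g b‖ ≤ 1 - ε := by
      have hrw : b * cfcₙ g b - cfcₙ g b = cfcₙ (fun s : ℝ => s * g s - g s) b := by
        rw [cfcₙ_sub (fun s : ℝ => s * g s) g b (by fun_prop) (by simp [hg0]) hgc.continuousOn hg0,
          cfcₙ_mul (fun s : ℝ => s) g b continuousOn_id rfl hgc.continuousOn hg0, cfcₙ_id' ℝ b]
      rw [hrw]
      apply norm_cfcₙ_le
      intro x hx
      obtain ⟨hx0, hx1⟩ := hspec x hx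
      rw [Real.norm_eq_abs, abs_le]
      constructor
      · -- `-(1-ε) ≤ x * g x - g x`, i.e. `g x * (1 - x) ≤ 1 - ε`
        have hle : g x ≤ max ((x - (2 * ε - 1)) / (1 - ε)) 0 := by
          apply max_le_max _ le_rfl
          exact le_trans (min_le_right _ _) (min_le_right _ _)
        rcases le_or_gt ((x - (2 * ε - 1)) / (1 - ε)) 0 with hq | hq
        · have : g x = 0 := le_antisymm (by rwa [max_eq_right hq] at hle) (hgnonneg x)
          rw [this]; nlinarith
        · rw [max_eq_left hq.le] at hle
          have hle' : g x * (1 - ε) ≤ x - (2 * ε - 1) := (le_div_iff₀ h1ε).mp hle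
          nlinarith [sq_nonneg (x - ε), hgnonneg x]
      · -- `x * g x - g x ≤ 1 - ε` since the LHS is `≤ 0`
        have : x * g x - g x = g x * (x - 1) := by ring
        nlinarith [hgnonneg x]
    calc ‖b * a - a‖ = ‖(b * cfcₙ g b - cfcₙ g b) * a‖ := by rw [hfactor]
    _ ≤ ‖b * cfcₙ g b - cfcₙ g b‖ * ‖a‖ := norm_mul_le _ _
    _ ≤ (1 - ε) * 1 := by
        apply mul_le_mul hnorm hna (norm_nonneg a) (by linarith)
    _ ≤ 2 * (1 - ε) := by linarith
end

section
/- Let A be a C*-algebra of stable rank one (the invertible elements are dense in the unitization). If z ∈ A and ε > 0, then there exists a unitary U in the unitization of A such that ‖z - U|z|‖ < ε, where |z| = (z*z)^{1/2}. -/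
open CFC
open scoped NNReal

section Aux
variable {B : Type*} [CStarAlgebra B] [PartialOrder B] [StarOrderedRing B]

lemma mySqrt_mul_sqrt_inv (b : Bˣ) (hb : 0 ≤ (b : B)) :
    sqrt (b : B) * sqrt (↑b⁻¹ : B) = 1 := by
  have h0 : 0 ∉ spectrum ℝ≥0 (b : B) := spectrum.zero_notMem ℝ≥0 b.isUnit
  rw [← rpow_neg_one_eq_inv b hb, sqrt_rpow b.isUnit (by norm_num), CFC.sqrt_eq_rpow]
  rw [show ((-1 : ℝ)/2) = -(1/2 : ℝ) by norm_num]
  exact rpow_mul_rpow_neg _ ⟨hb, b.isUnit⟩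

lemma mySqrt_inv_mul_sqrt (b : Bˣ) (hb : 0 ≤ (b : B)) :
    sqrt (↑b⁻¹ : B) * sqrt (b : B) = 1 := by
  have h0 : 0 ∉ spectrum ℝ≥0 (b : B) := spectrum.zero_notMem ℝ≥0 b.isUnit
  rw [← rpow_neg_one_eq_inv b hb, sqrt_rpow b.isUnit (by norm_num), CFC.sqrt_eq_rpow]
  rw [show ((-1 : ℝ)/2) = -(1/2 : ℝ) by norm_num]
  exact rpow_neg_mul_rpow _ ⟨hb, b.isUnit⟩

/-- The square-root unit of a nonneg unit. -/
noncomputable def sqrtUnit (b : Bˣ) (hb : 0 ≤ (b : B)) : Bˣ :=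
  ⟨sqrt (b : B), sqrt (↑b⁻¹ : B), mySqrt_mul_sqrt_inv b hb, mySqrt_inv_mul_sqrt b hb⟩

end Aux

section Aux2
variable {B : Type*} [CStarAlgebra B] [PartialOrder B] [StarOrderedRing B]

open CFC in
lemma mySqrt_le_sqrt_of_le_of_isUnit {x : B} (b : Bˣ) (hx : 0 ≤ x) (hb : 0 ≤ (b : B))
    (hxb : x ≤ (b : B)) : sqrt x ≤ sqrt (b : B) := by
  rcases subsingleton_or_nontrivial B with hB | hB
  · simp [Subsingleton.elim (sqrt x) (sqrt (b : B))]
  have hbinv : (0:B) ≤ ↑b⁻¹ := inv_nonneg_of_nonneg b hb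
  have h1 : ‖sqrt x * sqrt (↑b⁻¹ : B)‖ ≤ 1 := (le_iff_norm_sqrt_mul_sqrt_inv hx hb).mp hxb
  set sb : Bˣ := sqrtUnit b hb with hsb
  have hsbnn : 0 ≤ (sb : B) := sqrt_nonneg _
  show sqrt x ≤ (sb : B)
  rw [le_iff_norm_sqrt_mul_sqrt_inv (sqrt_nonneg _) hsbnn]
  have hsbinv : (↑sb⁻¹ : B) = sqrt (↑b⁻¹ : B) := rfl
  rw [hsbinv]
  set m := sqrt (↑b⁻¹ : B) with hm
  set p := sqrt (sqrt x) with hp'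
  set q := sqrt m with hq'
  have hp : 0 ≤ p := sqrt_nonneg _
  have hq : 0 ≤ q := sqrt_nonneg _
  have hpp : p * p = sqrt x := sqrt_mul_sqrt_self _ (sqrt_nonneg _)
  have hqq : q * q = m := sqrt_mul_sqrt_self _ (sqrt_nonneg _)
  have hmnn : 0 ≤ m := sqrt_nonneg _
  have hstar : star (p * q) = q * p := by
    rw [star_mul, (IsSelfAdjoint.of_nonneg hp).star_eq, (IsSelfAdjoint.of_nonneg hq).star_eq]
  have hw : (p * q) * star (p * q) = p * (m * p) := by
    rw [hstar, show p * q * (q * p) = p * (q * q) * p by simp only [mul_assoc], hqq, mul_assoc]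
  set w := p * (m * p) with hwdef
  have hwnn : 0 ≤ w := by
    have := star_right_conjugate_nonneg hmnn p
    rwa [(IsSelfAdjoint.of_nonneg hp).star_eq, mul_assoc] at this
  have hwle : ‖w‖ ≤ 1 := by
    rcases eq_or_ne ‖w‖ 0 with h0 | h0
    · rw [h0]; norm_num
    · have hmem : ‖w‖ ∈ spectrum ℝ w := CStarAlgebra.norm_mem_spectrum_of_nonneg hwnn
      have hmem2 : ‖w‖ ∈ spectrum ℝ (m * p * p) := by
        have := spectrum.nonzero_mul_comm (𝕜 := ℝ) p (m * p)
        have h3 : ‖w‖ ∈ spectrum ℝ (p * (m * p)) \ {0} := ⟨hmem, by simpa using h0⟩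
        rw [this] at h3
        exact h3.1
      have : m * p * p = m * sqrt x := by rw [mul_assoc, hpp]
      rw [this] at hmem2
      calc ‖w‖ ≤ ‖m * sqrt x‖ := by
            simpa using spectrum.norm_le_norm_of_mem hmem2
        _ = ‖sqrt x * m‖ := by
            rw [← norm_star, star_mul, (IsSelfAdjoint.of_nonneg hmnn).star_eq,
              (IsSelfAdjoint.of_nonneg (sqrt_nonneg (a := x))).star_eq]
        _ ≤ 1 := h1
  have := CStarRing.norm_self_mul_star (x := p * q)
  rw [hw] at this
  nlinarith [norm_nonneg (p * q), norm_nonneg w]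

end Aux2

section Aux3
variable {B : Type*} [CStarAlgebra B] [PartialOrder B] [StarOrderedRing B]

open CFC in
lemma myAlgebraMap_nonneg {r : ℝ} (hr : 0 ≤ r) : (0:B) ≤ algebraMap ℝ B r := by
  have := star_mul_self_nonneg (algebraMap ℝ B (Real.sqrt r))
  rwa [show star (algebraMap ℝ B (Real.sqrt r)) = algebraMap ℝ B (Real.sqrt r) from
    (IsSelfAdjoint.algebraMap B (isSelfAdjoint_iff.mpr rfl)).star_eq,
    ← map_mul, Real.mul_self_sqrt hr] at this

open CFC in
lemma mySqrt_le_sqrt_add (x y : B) (hx : 0 ≤ x) (hy : 0 ≤ y) :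
    sqrt x ≤ sqrt y + algebraMap ℝ B (Real.sqrt ‖x - y‖) := by
  rcases eq_or_ne ‖x - y‖ 0 with h0 | h0
  · obtain rfl : x = y := by rwa [norm_sub_eq_zero_iff] at h0
    simp
  have hr : (0:ℝ) < ‖x - y‖ := (norm_nonneg _).lt_of_ne' h0
  set r : ℝ := ‖x - y‖ with hrdef
  set r' : ℝ≥0 := ‖x - y‖₊ with hr'def
  have hrr' : (r' : ℝ) = r := rfl
  have hxy : x ≤ y + algebraMap ℝ B r := by
    have hsa : IsSelfAdjoint (x - y) := (IsSelfAdjoint.of_nonneg hx).sub (.of_nonneg hy)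
    have := hsa.le_algebraMap_norm_self
    calc x = y + (x - y) := by abel
    _ ≤ y + algebraMap ℝ B r := by exact add_le_add_right this y
  set t : B := y + algebraMap ℝ B r with htdef
  have hmapnn : (0:B) ≤ algebraMap ℝ B r := myAlgebraMap_nonneg hr.le
  have htnn : 0 ≤ t := add_nonneg hy hmapnn
  have htunit : IsUnit t := by
    refine CStarAlgebra.isUnit_of_le _ (le_add_of_nonneg_left hy) ⟨hmapnn, ?_⟩
    exact (isUnit_iff_ne_zero.mpr hr.ne').map (algebraMap ℝ B)
  have h1 : sqrt x ≤ sqrt t := by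
    have := mySqrt_le_sqrt_of_le_of_isUnit htunit.unit hx (by rwa [htunit.unit_spec])
      (by rwa [htunit.unit_spec])
    rwa [htunit.unit_spec] at this
  have hmapeq : algebraMap ℝ B r = algebraMap ℝ≥0 B r' := by
    rw [IsScalarTower.algebraMap_apply ℝ≥0 ℝ B]; rfl
  have ht_cfc : t = cfc (fun s : ℝ≥0 => s + r') y := by
    rw [cfc_add (a := y) (fun s : ℝ≥0 => s) (fun _ => r') (by fun_prop) (by fun_prop),
      cfc_id' (R := ℝ≥0) (a := y) hy, cfc_const r' y hy, htdef, hmapeq]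
  have h2 : sqrt t = cfc (fun s : ℝ≥0 => NNReal.sqrt (s + r')) y := by
    refine sqrt_unique ?_ (cfc_predicate _ y)
    rw [← cfc_mul _ _ y, ht_cfc]
    exact cfc_congr fun s _ => NNReal.mul_self_sqrt _
  have h3 : cfc (fun s : ℝ≥0 => NNReal.sqrt (s + r')) y
      ≤ cfc (fun s : ℝ≥0 => NNReal.sqrt s + NNReal.sqrt r') y := by
    refine cfc_mono fun s _ => ?_
    rw [NNReal.sqrt_le_iff_le_sq, add_sq, NNReal.sq_sqrt, NNReal.sq_sqrt]
    exact add_le_add_left (le_add_of_nonneg_right (zero_le)) r'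
  have h4 : cfc (fun s : ℝ≥0 => NNReal.sqrt s + NNReal.sqrt r') y
      = sqrt y + algebraMap ℝ B (Real.sqrt r) := by
    rw [cfc_add (a := y) _ _, cfc_const _ y, ← sqrt_eq_cfc (a := y)]
    congr 1
    rw [IsScalarTower.algebraMap_apply ℝ≥0 ℝ B]
    rw [show (algebraMap ℝ≥0 ℝ) (NNReal.sqrt r') = ((NNReal.sqrt r' : ℝ≥0) : ℝ) from rfl,
      Real.coe_sqrt]
    norm_num [hrr']
  calc sqrt x ≤ sqrt t := h1
  _ = _ := h2
  _ ≤ _ := h3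
  _ = _ := h4
end Aux3

section Aux4
variable {B : Type*} [CStarAlgebra B] [PartialOrder B] [StarOrderedRing B]

open CFC in
lemma myNorm_sqrt_sub_sqrt_le (x y : B) (hx : 0 ≤ x) (hy : 0 ≤ y) :
    ‖sqrt x - sqrt y‖ ≤ 3 * Real.sqrt ‖x - y‖ := by
  rcases subsingleton_or_nontrivial B with hB | hB
  · rw [Subsingleton.elim (sqrt x - sqrt y) 0, norm_zero]
    positivity
  set s := Real.sqrt ‖x - y‖ with hsdef
  have hs : 0 ≤ s := Real.sqrt_nonneg _
  set d := sqrt x - sqrt y with hddef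
  have h1 : d ≤ algebraMap ℝ B s := sub_le_iff_le_add'.mpr (mySqrt_le_sqrt_add x y hx hy)
  have h2 : sqrt y - sqrt x ≤ algebraMap ℝ B s := by
    have := mySqrt_le_sqrt_add y x hy hx
    rw [norm_sub_rev] at this
    exact sub_le_iff_le_add'.mpr this
  have hnn : 0 ≤ d + algebraMap ℝ B s := by
    have h3 := sub_nonneg.mpr h2
    have : algebraMap ℝ B s - (sqrt y - sqrt x) = d + algebraMap ℝ B s := by
      rw [hddef]; abel
    rwa [this] at h3
  have hub : d + algebraMap ℝ B s ≤ algebraMap ℝ B (2 * s) := by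
    have h4 := add_le_add_left h1 (algebraMap ℝ B s)
    rw [two_mul, map_add]
    exact h4
  have hnorm1 : ‖d + algebraMap ℝ B s‖ ≤ 2 * s :=
    (CStarAlgebra.norm_le_iff_le_algebraMap _ (by positivity) hnn).mpr hub
  calc ‖d‖ = ‖(d + algebraMap ℝ B s) - algebraMap ℝ B s‖ := by rw [add_sub_cancel_right]
  _ ≤ ‖d + algebraMap ℝ B s‖ + ‖algebraMap ℝ B s‖ := norm_sub_le _ _
  _ ≤ 2 * s + s := by
      refine add_le_add hnorm1 ?_
      rw [norm_algebraMap']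
      simpa using le_of_eq (abs_of_nonneg hs)
  _ = 3 * s := by ring

end Aux4

set_option maxHeartbeats 1000000 in
open CFC in
theorem exists_unitary_approx_polar_of_stableRankOne
    {A : Type*} [NonUnitalCStarAlgebra A] [PartialOrder A] [StarOrderedRing A]
    (hsr1 : Dense {u : Unitization ℂ A | IsUnit u})
    (z : A) (ε : ℝ) (hε : 0 < ε) :
    ∃ U : Unitization ℂ A, U ∈ unitary (Unitization ℂ A) ∧
      ‖(z : Unitization ℂ A) - U * ((CFC.sqrt (star z * z) : A) : Unitization ℂ A)‖ < ε := by
  set Z : Unitization ℂ A := (z : Unitization ℂ A) with hZdef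
  have hcoe : ((CFC.sqrt (star z * z) : A) : Unitization ℂ A) = sqrt (star Z * Z) := by
    show ((cfcₙ NNReal.sqrt (star z * z) : A) : Unitization ℂ A) = _
    rw [Unitization.nnreal_cfcₙ_eq_cfc_inr (star z * z) NNReal.sqrt (by simp), ← sqrt_eq_cfc]
    congr 1
    rw [Unitization.inr_mul, Unitization.inr_star]
  rw [hcoe]
  -- choose δ
  set δ : ℝ := min 1 (min (ε/2) ((ε/6)^2/(2*‖Z‖+1))) with hδdef
  have hδpos : 0 < δ := by
    have h1 : (0:ℝ) < (ε/6)^2/(2*‖Z‖+1) := by positivity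
    have h2 : (0:ℝ) < ε/2 := by positivity
    simp [hδdef, h1, h2]
  have hδ1 : δ ≤ 1 := min_le_left _ _
  have hδ2 : δ ≤ ε/2 := le_trans (min_le_right _ _) (min_le_left _ _)
  have hδ3 : δ ≤ (ε/6)^2/(2*‖Z‖+1) := le_trans (min_le_right _ _) (min_le_right _ _)
  -- density
  obtain ⟨a, ha_ball, ha_unit⟩ := Metric.dense_iff.mp hsr1 Z δ hδpos
  have hdist : ‖Z - a‖ < δ := by rwa [← dist_eq_norm, ← Metric.mem_ball']
  -- polar decomposition of a
  have hstaraa_nn : (0:Unitization ℂ A) ≤ star a * a := star_mul_self_nonneg a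
  have hstaraa_unit : IsUnit (star a * a) := ha_unit.star.mul ha_unit
  obtain ⟨m, hmval⟩ : ∃ m : (Unitization ℂ A)ˣ, (m : Unitization ℂ A) = sqrt (star a * a) := by
    refine ⟨sqrtUnit hstaraa_unit.unit (by rw [hstaraa_unit.unit_spec]; exact hstaraa_nn), ?_⟩
    exact congrArg sqrt hstaraa_unit.unit_spec
  have hm_nn : (0:Unitization ℂ A) ≤ (m : Unitization ℂ A) := hmval ▸ sqrt_nonneg _
  have hminv_nn : (0:Unitization ℂ A) ≤ ↑m⁻¹ := inv_nonneg_of_nonneg m hm_nn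
  have hm_sq : (m : Unitization ℂ A) * m = star a * a := by
    rw [hmval]; exact sqrt_mul_sqrt_self _ hstaraa_nn
  obtain ⟨U, hUval⟩ : ∃ U : (Unitization ℂ A)ˣ, (U : Unitization ℂ A) = a * ↑m⁻¹ :=
    ⟨ha_unit.unit * m⁻¹, by rw [Units.val_mul, ha_unit.unit_spec]⟩
  have hustar : star (U : Unitization ℂ A) = ↑m⁻¹ * star a := by
    rw [hUval, star_mul, (IsSelfAdjoint.of_nonneg hminv_nn).star_eq]
  have h_su_u : star (U : Unitization ℂ A) * U = 1 := by
    have e1 : star (U : Unitization ℂ A) * U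
        = ↑m⁻¹ * (((m : Unitization ℂ A) * m) * ↑m⁻¹) := by
      rw [hustar, hUval, hm_sq]; simp only [mul_assoc]
    rw [e1, show ((m : Unitization ℂ A) * m) * ↑m⁻¹
        = (m : Unitization ℂ A) * ((m : Unitization ℂ A) * ↑m⁻¹) by simp only [mul_assoc],
      Units.mul_inv, mul_one, Units.inv_mul]
  have hstar_eq : star ((U : Unitization ℂ A)) = ↑U⁻¹ := by
    calc star (U : Unitization ℂ A)
        = star (U : Unitization ℂ A) * ((U : Unitization ℂ A) * ↑U⁻¹) := by
          rw [Units.mul_inv, mul_one]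
    _ = (star (U : Unitization ℂ A) * (U : Unitization ℂ A)) * ↑U⁻¹ := by rw [mul_assoc]
    _ = ↑U⁻¹ := by rw [h_su_u, one_mul]
  have h_u_su : (U : Unitization ℂ A) * star (U : Unitization ℂ A) = 1 := by
    rw [hstar_eq, Units.mul_inv]
  have hu_mem : (U : Unitization ℂ A) ∈ unitary (Unitization ℂ A) :=
    Unitary.mem_iff.mpr ⟨h_su_u, h_u_su⟩
  refine ⟨U, hu_mem, ?_⟩
  have h_ua : (U : Unitization ℂ A) * (m : Unitization ℂ A) = a := by
    rw [hUval, mul_assoc, Units.inv_mul, mul_one]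
  -- estimates
  have hZnn : (0:Unitization ℂ A) ≤ star Z * Z := star_mul_self_nonneg Z
  have hkey : ‖star a * a - star Z * Z‖ ≤ δ * (2*‖Z‖+1) := by
    have e : star a * a - star Z * Z = star a * (a - Z) + star (a - Z) * Z := by
      simp only [mul_sub, sub_mul, star_sub]; abel
    have hna : ‖a‖ ≤ ‖Z‖ + δ := by
      calc ‖a‖ = ‖Z - (Z - a)‖ := by rw [sub_sub_cancel]
      _ ≤ ‖Z‖ + ‖Z - a‖ := norm_sub_le _ _
      _ ≤ ‖Z‖ + δ := by linarith
    have haz : ‖a - Z‖ ≤ δ := by rw [norm_sub_rev]; exact hdist.le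
    calc ‖star a * a - star Z * Z‖ ≤ ‖star a * (a - Z)‖ + ‖star (a - Z) * Z‖ := by
          rw [e]; exact norm_add_le _ _
    _ ≤ ‖a‖ * ‖a - Z‖ + ‖a - Z‖ * ‖Z‖ := by
        refine add_le_add ?_ ?_
        · calc ‖star a * (a - Z)‖ ≤ ‖star a‖ * ‖a - Z‖ := norm_mul_le _ _
          _ = ‖a‖ * ‖a - Z‖ := by rw [norm_star]
        · calc ‖star (a - Z) * Z‖ ≤ ‖star (a - Z)‖ * ‖Z‖ := norm_mul_le _ _
          _ = ‖a - Z‖ * ‖Z‖ := by rw [norm_star]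
    _ ≤ δ * (2*‖Z‖+1) := by
        have h5 : ‖a‖ ≤ ‖Z‖ + 1 := hna.trans (by linarith)
        have h0 : (0:ℝ) ≤ ‖Z‖ := norm_nonneg _
        have h6 : (0:ℝ) ≤ ‖a - Z‖ := norm_nonneg _
        nlinarith
  have hsqrt_bound : ‖sqrt (star a * a) - sqrt (star Z * Z)‖ ≤ ε/2 := by
    refine (myNorm_sqrt_sub_sqrt_le _ _ hstaraa_nn hZnn).trans ?_
    have h1 : ‖star a * a - star Z * Z‖ ≤ (ε/6)^2 := by
      refine hkey.trans ?_
      have hpos : (0:ℝ) < 2*‖Z‖+1 := by positivity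
      calc δ * (2*‖Z‖+1) ≤ ((ε/6)^2/(2*‖Z‖+1)) * (2*‖Z‖+1) := by gcongr
      _ = (ε/6)^2 := by field_simp
    have h2 : Real.sqrt ‖star a * a - star Z * Z‖ ≤ ε/6 := by
      refine (Real.sqrt_le_sqrt h1).trans ?_
      rw [Real.sqrt_sq (by positivity)]
    linarith
  have hnormu : ‖(U : Unitization ℂ A)‖ = 1 := CStarRing.norm_of_mem_unitary hu_mem
  calc ‖Z - (U : Unitization ℂ A) * sqrt (star Z * Z)‖
      = ‖(Z - a) + (U : Unitization ℂ A) * (sqrt (star a * a) - sqrt (star Z * Z))‖ := by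
        rw [mul_sub, ← hmval, h_ua]; congr 1; abel
  _ ≤ ‖Z - a‖ + ‖(U : Unitization ℂ A) * (sqrt (star a * a) - sqrt (star Z * Z))‖ :=
        norm_add_le _ _
  _ ≤ ‖Z - a‖ + ‖(U : Unitization ℂ A)‖ * ‖sqrt (star a * a) - sqrt (star Z * Z)‖ := by
        have := norm_mul_le (U : Unitization ℂ A) (sqrt (star a * a) - sqrt (star Z * Z))
        linarith
  _ < δ + ε/2 := by
        rw [hnormu, one_mul]
        exact add_lt_add_of_lt_of_le hdist hsqrt_bound
  _ ≤ ε := by linarith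
end

section
/- Let A be a C*-algebra, let x₁, ..., x_k ∈ A satisfy the orthogonality relations x_i x_j* = x_i* x_j = 0 for i ≠ j, and let x = x₁ + ... + x_k with polar decomposition x = V|x| in the bidual of A. Then x_i = V|x_i| for each i; that is, the partial isometry of the sum implements the polar decompositions of each summand. -/
section Aux

variable {M : Type*} [CStarAlgebra M] [PartialOrder M] [StarOrderedRing M]

private lemma aux_mul_eq_zero_of_sq_mul_sq {a b : M} (ha : 0 ≤ a) (hb : 0 ≤ b)
    (h : (a * a) * (b * b) = 0) : a * b = 0 := by
  have hsa : star a = a := (IsSelfAdjoint.of_nonneg ha).star_eq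
  have hsb : star b = b := (IsSelfAdjoint.of_nonneg hb).star_eq
  have h' : (b * b) * (a * a) = 0 := by
    have := congrArg star h
    simpa [star_mul, hsa, hsb, mul_assoc] using this
  set c : M := b * (a * a) * b with hc
  have hcsa : star c = c := by simp [hc, star_mul, hsa, hsb, mul_assoc]
  have hcsq : c * c = 0 := by
    have : c * c = b * (a * a) * ((b * b) * (a * a)) * b := by
      simp [hc, mul_assoc]
    rw [this, h']
    simp
  have hc0 : c = 0 := by
    rw [← CStarRing.star_mul_self_eq_zero_iff c, hcsa, hcsq]
  have : star (a * b) * (a * b) = 0 := by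
    have : star (a * b) * (a * b) = b * (a * a) * b := by
      simp [star_mul, hsa, hsb, mul_assoc]
    rw [this, ← hc, hc0]
  exact (CStarRing.star_mul_self_eq_zero_iff _).mp this

end Aux

theorem polar_partial_isometry_of_orthogonal_sum
    {M : Type*} [CStarAlgebra M] [PartialOrder M] [StarOrderedRing M]
    {k : ℕ} (x : Fin k → M)
    (horth : ∀ i j, i ≠ j → x i * star (x j) = 0 ∧ star (x i) * x j = 0)
    (V : M)
    (hpolar : (∑ i, x i) = V * CFC.sqrt (star (∑ i, x i) * (∑ i, x i)))
    (hsupp : star V * V * CFC.sqrt (star (∑ i, x i) * (∑ i, x i))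
      = CFC.sqrt (star (∑ i, x i) * (∑ i, x i)))
    (hV : V * star V * V = V) :
    ∀ i, x i = V * CFC.sqrt (star (x i) * x i) := by
  classical
  set a : Fin k → M := fun i => CFC.sqrt (star (x i) * x i) with ha
  have hnn : ∀ i, (0 : M) ≤ star (x i) * x i := fun i => star_mul_self_nonneg _
  have hann : ∀ i, (0 : M) ≤ a i := fun i => CFC.sqrt_nonneg _
  have hasa : ∀ i, star (a i) = a i := fun i => (IsSelfAdjoint.of_nonneg (hann i)).star_eq
  have hsq : ∀ i, a i * a i = star (x i) * x i := fun i => by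
    simpa [pow_two] using CFC.sq_sqrt (star (x i) * x i) (hnn i)
  -- pairwise orthogonality of the a i
  have haa : ∀ i j, i ≠ j → a i * a j = 0 := by
    intro i j hij
    apply aux_mul_eq_zero_of_sq_mul_sq (hann i) (hann j)
    rw [hsq i, hsq j]
    calc star (x i) * x i * (star (x j) * x j)
        = star (x i) * ((x i * star (x j)) * x j) := by simp [mul_assoc]
      _ = 0 := by rw [(horth i j hij).1]; simp
  -- x i * a j = 0 for i ≠ j
  have hxa : ∀ i j, i ≠ j → x i * a j = 0 := by
    intro i j hij
    have : star (x i * a j) * (x i * a j) = 0 := by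
      have : star (x i * a j) * (x i * a j) = a j * (star (x i) * x i) * a j := by
        simp [star_mul, hasa, mul_assoc]
      rw [this, ← hsq i]
      calc a j * (a i * a i) * a j = (a j * a i) * (a i * a j) := by simp [mul_assoc]
        _ = 0 := by rw [haa j i hij.symm, haa i j hij]; simp
    exact (CStarRing.star_mul_self_eq_zero_iff _).mp this
  have hax : ∀ i j, i ≠ j → a i * star (x j) = 0 := by
    intro i j hij
    have := congrArg star (hxa j i hij.symm)
    simpa [star_mul, hasa] using this
  -- diagonal sum lemma
  have key : ∀ (f g : Fin k → M), (∀ i j, i ≠ j → f i * g j = 0) →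
      (∑ i, f i) * (∑ j, g j) = ∑ i, f i * g i := by
    intro f g h
    rw [Finset.sum_mul_sum]
    refine Finset.sum_congr rfl fun i _ => ?_
    exact Finset.sum_eq_single_of_mem i (Finset.mem_univ i)
      (fun j _ hj => h i j (Ne.symm hj))
  -- |x| = ∑ a i
  have hstar : star (∑ i, x i) * (∑ i, x i) = (∑ i, a i) * (∑ i, a i) := by
    rw [star_sum, key (fun i => star (x i)) x (fun i j hij => (horth i j hij).2),
      key a a haa]
    exact Finset.sum_congr rfl fun i _ => (hsq i).symm
  have hsum_nn : (0 : M) ≤ ∑ i, a i := Finset.sum_nonneg fun i _ => hann i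
  have hsqrt : CFC.sqrt (star (∑ i, x i) * (∑ i, x i)) = ∑ i, a i := by
    rw [hstar, ← pow_two]
    exact CFC.sqrt_sq _ hsum_nn
  -- the differences
  set d : Fin k → M := fun i => x i - V * a i with hd
  have hdsum : (∑ i, d i) = 0 := by
    simp only [hd, Finset.sum_sub_distrib, ← Finset.mul_sum]
    rw [← hsqrt, ← hpolar, sub_self]
  have hdd : ∀ i j, i ≠ j → d i * star (d j) = 0 := by
    intro i j hij
    have expand : d i * star (d j) =
        x i * star (x j) - (x i * a j) * star V - V * (a i * star (x j))
          + V * ((a i * a j) * star V) := by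
      simp only [hd, star_sub, star_mul, hasa]
      noncomm_ring
    rw [expand, (horth i j hij).1, hxa i j hij, hax i j hij, haa i j hij]
    simp
  have hzero : ∑ i, d i * star (d i) = 0 := by
    rw [← key d (fun i => star (d i)) hdd, hdsum]
    simp
  intro i
  have hi : d i * star (d i) = 0 := by
    have hle : ∀ j ∈ Finset.univ, (0 : M) ≤ d j * star (d j) :=
      fun j _ => mul_star_self_nonneg _
    exact (Finset.sum_eq_zero_iff_of_nonneg hle).mp hzero i (Finset.mem_univ i)
  have : d i = 0 := (CStarRing.mul_star_self_eq_zero_iff _).mp hi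
  have := sub_eq_zero.mp this
  simpa [ha] using this
end

section
/- Let A be a C*-algebra of stable rank one and let x ∈ A have polar decomposition x = V|x| in the bidual. Then for every δ > 0 there exists a unitary W in the unitization of A with ‖V|x| − W|x|‖ < δ; consequently, for every finite subset F of the hereditary subalgebra closure(|x| A |x|) and every δ > 0 there is a unitary W ∈ Ã with ‖VyV* − WyW*‖ < δ for all y ∈ F. -/
section Aux

variable {B : Type*} [CStarAlgebra B] [PartialOrder B] [StarOrderedRing B]

private lemma myIsUnit_sqrt {b : B} (hb : 0 ≤ b) (hbu : IsUnit b) : IsUnit (CFC.sqrt b) := by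
  obtain ⟨v, hv, hv'⟩ := isUnit_iff_exists.mp hbu
  have h1 : CFC.sqrt b * (CFC.sqrt b * v) = 1 := by
    rw [← mul_assoc, CFC.sqrt_mul_sqrt_self b hb, hv]
  have h2 : (v * CFC.sqrt b) * CFC.sqrt b = 1 := by
    rw [mul_assoc, CFC.sqrt_mul_sqrt_self b hb, hv']
  have h3 : v * CFC.sqrt b = CFC.sqrt b * v := by
    calc v * CFC.sqrt b = (v * CFC.sqrt b) * (CFC.sqrt b * (CFC.sqrt b * v)) := by
          rw [h1, mul_one]
      _ = ((v * CFC.sqrt b) * CFC.sqrt b) * (CFC.sqrt b * v) := by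
          simp only [mul_assoc]
      _ = CFC.sqrt b * v := by rw [h2, one_mul]
  exact isUnit_iff_exists.mpr ⟨CFC.sqrt b * v, h1, by rw [← h3]; exact h2⟩

private lemma mySqrt_le_sqrt {a b : B} (ha : 0 ≤ a) (hb : 0 ≤ b) (hbu : IsUnit b) (hab : a ≤ b) :
    CFC.sqrt a ≤ CFC.sqrt b := by
  obtain htriv | hnt := subsingleton_or_nontrivial B
  · exact le_of_eq (Subsingleton.elim _ _)
  have hsb : (0:B) ≤ CFC.sqrt b := (CFC.sqrt_nonneg _)
  have hsbu : IsUnit (CFC.sqrt b) := myIsUnit_sqrt hb hbu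
  set u : Bˣ := hsbu.unit with hu
  have huc : (↑u : B) = CFC.sqrt b := hsbu.unit_spec
  set u0 : Bˣ := hbu.unit with hu0
  have hu0c : (↑u0 : B) = b := hbu.unit_spec
  have hkn : ‖CFC.sqrt a * CFC.sqrt (↑u0⁻¹ : B)‖ ≤ 1 :=
    (le_iff_norm_sqrt_mul_sqrt_inv (b := u0) ha (by rw [hu0c]; exact hb)).mp
      (by rw [hu0c]; exact hab)
  have huu : u * u = u0 := by
    ext; rw [Units.val_mul, huc, hu0c]; exact CFC.sqrt_mul_sqrt_self b hb
  have hiu : (0:B) ≤ (↑u⁻¹ : B) := CFC.inv_nonneg_of_nonneg u (by rw [huc]; exact hsb)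
  have hinv : (↑u0⁻¹ : B) = (↑u⁻¹ : B) * (↑u⁻¹ : B) := by
    rw [← huu, mul_inv_rev, Units.val_mul]
  have hr : CFC.sqrt (↑u0⁻¹ : B) = (↑u⁻¹ : B) := by
    rw [hinv]; exact CFC.sqrt_mul_self _ hiu
  set s := CFC.sqrt (↑u⁻¹ : B) with hs
  have hs0 : (0:B) ≤ s := (CFC.sqrt_nonneg _)
  have hss : s * s = (↑u⁻¹ : B) := CFC.sqrt_mul_sqrt_self _ hiu
  set p := CFC.sqrt (CFC.sqrt a) with hp
  have hp0 : (0:B) ≤ p := (CFC.sqrt_nonneg _)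
  have hpp : p * p = CFC.sqrt a := CFC.sqrt_mul_sqrt_self _ (CFC.sqrt_nonneg _)
  have hz : star (p * s) * (p * s) = s * CFC.sqrt a * s := by
    rw [star_mul, (IsSelfAdjoint.of_nonneg hs0).star_eq, (IsSelfAdjoint.of_nonneg hp0).star_eq]
    calc s * p * (p * s) = s * (p * p) * s := by simp only [mul_assoc]
      _ = s * CFC.sqrt a * s := by rw [hpp]
  have hznn : (0:B) ≤ s * CFC.sqrt a * s := by
    simpa [(IsSelfAdjoint.of_nonneg hs0).star_eq] using
      star_left_conjugate_nonneg (CFC.sqrt_nonneg (a := a)) s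
  have hspec : ∀ t ∈ spectrum ℝ (s * CFC.sqrt a * s), t ≤ 1 := by
    intro t ht
    rcases eq_or_ne t 0 with h0 | h0
    · simp [h0]
    · have ht' : t ∈ spectrum ℝ (CFC.sqrt a * s * s) := by
        have hswap : spectrum ℝ (s * (CFC.sqrt a * s)) \ {0} = spectrum ℝ ((CFC.sqrt a * s) * s) \ {0} := spectrum.nonzero_mul_comm _ _
        have : t ∈ spectrum ℝ (s * (CFC.sqrt a * s)) \ {0} := by
          rw [← mul_assoc]; exact ⟨ht, h0⟩
        rw [hswap] at this
        simpa [mul_assoc] using this.1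
      rw [mul_assoc, hss, ← hr] at ht'
      have := spectrum.norm_le_norm_of_mem ht'
      calc t ≤ |t| := le_abs_self t
        _ = ‖t‖ := rfl
        _ ≤ ‖CFC.sqrt a * CFC.sqrt (↑u0⁻¹ : B)‖ := this
        _ ≤ 1 := hkn
  have hnorm : ‖s * CFC.sqrt a * s‖ ≤ 1 :=
    hspec _ (CStarAlgebra.norm_mem_spectrum_of_nonneg hznn)
  have hps : ‖p * s‖ ≤ 1 := by
    have hcs := CStarRing.norm_star_mul_self (x := p * s)
    rw [hz] at hcs
    nlinarith [norm_nonneg (p * s)]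
  have final : CFC.sqrt a ≤ (↑u : B) :=
    (le_iff_norm_sqrt_mul_sqrt_inv (a := CFC.sqrt a) (b := u) (CFC.sqrt_nonneg _)
      (by rw [huc]; exact hsb)).mpr hps
  rwa [huc] at final

private lemma myKey {c d : B} {r : ℝ} (hc : 0 ≤ c) (hd : 0 ≤ d) (hr : 0 < r)
    (hcd : ‖c - d‖ ≤ r) : CFC.sqrt c ≤ CFC.sqrt d + Real.sqrt r • 1 := by
  have hsd : (0:B) ≤ CFC.sqrt d := (CFC.sqrt_nonneg _)
  have hr0 : (0:ℝ) ≤ r := hr.le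
  have hrs : (0:ℝ) ≤ Real.sqrt r := Real.sqrt_nonneg r
  have h1 : c - d ≤ r • (1:B) := by
    have ha := IsSelfAdjoint.le_algebraMap_norm_self
      (a := c - d) ((IsSelfAdjoint.of_nonneg hc).sub (IsSelfAdjoint.of_nonneg hd))
    rw [Algebra.algebraMap_eq_smul_one] at ha
    refine ha.trans ?_
    rw [← sub_nonneg, ← sub_smul]
    exact smul_nonneg (by linarith) zero_le_one
  have h2 : c ≤ d + r • 1 := by
    rw [add_comm]; exact sub_le_iff_le_add.mp h1
  have hd1_nonneg : (0:B) ≤ d + r • 1 :=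
    add_nonneg hd (smul_nonneg hr0 zero_le_one)
  have hrunit : IsUnit (r • (1:B)) := by
    rw [← Algebra.algebraMap_eq_smul_one]
    exact (isUnit_iff_ne_zero.mpr hr.ne').map (algebraMap ℝ B)
  have hr1_nonneg : (0:B) ≤ r • 1 := smul_nonneg hr0 zero_le_one
  have hd1_unit : IsUnit (d + r • 1) :=
    CStarAlgebra.isUnit_of_le (r • (1:B)) (le_add_of_nonneg_left hd) ⟨hr1_nonneg, hrunit⟩
  set g : B := CFC.sqrt d + Real.sqrt r • 1 with hg
  have hg0 : (0:B) ≤ g := add_nonneg hsd (smul_nonneg hrs zero_le_one)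
  have hgg : g * g = (d + r • 1) + (2 * Real.sqrt r) • CFC.sqrt d := by
    rw [hg]
    simp only [mul_add, add_mul, smul_mul_assoc, mul_smul_comm, one_mul, mul_one,
      smul_smul, CFC.sqrt_mul_sqrt_self d hd, Real.mul_self_sqrt hr0, Real.sq_sqrt hr0]
    match_scalars <;> nlinarith [Real.sq_sqrt hr0]
  have hle : d + r • 1 ≤ g * g := by
    rw [hgg]
    exact le_add_of_nonneg_right (smul_nonneg (by linarith) hsd)
  have hsrunit : IsUnit (Real.sqrt r • (1:B)) := by
    rw [← Algebra.algebraMap_eq_smul_one]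
    exact (isUnit_iff_ne_zero.mpr (Real.sqrt_pos.mpr hr).ne').map (algebraMap ℝ B)
  have hgunit : IsUnit g :=
    CStarAlgebra.isUnit_of_le (Real.sqrt r • (1:B))
      (le_add_of_nonneg_left hsd) ⟨smul_nonneg hrs zero_le_one, hsrunit⟩
  have hggnn : (0:B) ≤ g * g := by
    have h := star_mul_self_nonneg g
    rwa [(IsSelfAdjoint.of_nonneg hg0).star_eq] at h
  calc CFC.sqrt c ≤ CFC.sqrt (d + r • 1) := mySqrt_le_sqrt hc hd1_nonneg hd1_unit h2
    _ ≤ CFC.sqrt (g * g) := mySqrt_le_sqrt hd1_nonneg hggnn (hgunit.mul hgunit) hle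
    _ = g := CFC.sqrt_mul_self g hg0

private lemma myNormSqrtSub {c d : B} (hc : 0 ≤ c) (hd : 0 ≤ d) :
    ‖CFC.sqrt c - CFC.sqrt d‖ ≤ 3 * Real.sqrt ‖c - d‖ := by
  obtain htriv | hnt := subsingleton_or_nontrivial B
  · rw [Subsingleton.elim (CFC.sqrt c - CFC.sqrt d) 0, norm_zero]
    positivity
  rcases eq_or_ne c d with rfl | hne
  · simp
  have hr : (0:ℝ) < ‖c - d‖ := by
    rw [norm_pos_iff]; exact sub_ne_zero.mpr hne
  set r := ‖c - d‖ with hrdef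
  set t := Real.sqrt r with htdef
  have ht0 : 0 ≤ t := Real.sqrt_nonneg r
  have h₁ : CFC.sqrt c ≤ CFC.sqrt d + t • 1 := myKey hc hd hr le_rfl
  have h₂ : CFC.sqrt d ≤ CFC.sqrt c + t • 1 := myKey hd hc hr (by rw [norm_sub_rev])
  set y : B := CFC.sqrt c - CFC.sqrt d with hy
  have hy1 : y ≤ t • 1 := sub_le_iff_le_add.mpr (by rwa [add_comm] at h₁)
  have hy2 : (0:B) ≤ y + t • 1 := by
    have h := sub_nonneg.mpr h₂
    have e : CFC.sqrt c + t • 1 - CFC.sqrt d = y + t • 1 := by rw [hy]; abel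
    rwa [e] at h
  have hyn : ‖y + t • 1‖ ≤ 2 * t := by
    rw [CStarAlgebra.norm_le_iff_le_algebraMap _ (by linarith) hy2,
      Algebra.algebraMap_eq_smul_one]
    calc y + t • 1 ≤ t • 1 + t • 1 := add_le_add_left hy1 _
      _ = (2 * t) • (1:B) := by module
  calc ‖y‖ = ‖(y + t • 1) - t • 1‖ := by congr 1; abel
    _ ≤ ‖y + t • 1‖ + ‖t • (1:B)‖ := norm_sub_le _ _
    _ ≤ 2 * t + t := by
        gcongr
        rw [norm_smul, norm_one, Real.norm_of_nonneg ht0, mul_one]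
    _ = 3 * Real.sqrt r := by ring

private lemma myApprox (q b : B) (hbu : IsUnit b) (ε : ℝ) (hε : 0 < ε) (hbq : ‖b - q‖ ≤ ε) :
    ∃ W : B, W ∈ unitary B ∧
      ‖q - W * CFC.sqrt (star q * q)‖ ≤ ε + 3 * Real.sqrt (ε * (2 * ‖q‖ + ε)) := by
  obtain htriv | hnt := subsingleton_or_nontrivial B
  · refine ⟨1, ?_, ?_⟩
    · exact one_mem (unitary B)
    · rw [Subsingleton.elim (q - 1 * CFC.sqrt (star q * q)) 0, norm_zero]
      positivity
  set s : B := star b * b with hs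
  have hs0 : (0:B) ≤ s := star_mul_self_nonneg b
  have hsu : IsUnit s := hbu.star.mul hbu
  have htu : IsUnit (CFC.sqrt s) := myIsUnit_sqrt hs0 hsu
  set t : Bˣ := htu.unit with ht
  have htc : (↑t : B) = CFC.sqrt s := htu.unit_spec
  have hts : IsSelfAdjoint (↑t : B) := htc ▸ IsSelfAdjoint.of_nonneg (CFC.sqrt_nonneg _)
  have hstar_inv : star (↑t⁻¹ : B) = (↑t⁻¹ : B) := by
    have h1 : star (↑t⁻¹ : B) * (↑t : B) = 1 := by
      rw [← hts.star_eq, ← star_mul, t.mul_inv, star_one]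
    calc star (↑t⁻¹ : B) = star (↑t⁻¹ : B) * ((↑t : B) * (↑t⁻¹ : B)) := by
          rw [t.mul_inv, mul_one]
      _ = (star (↑t⁻¹ : B) * (↑t : B)) * (↑t⁻¹ : B) := by rw [mul_assoc]
      _ = (↑t⁻¹ : B) := by rw [h1, one_mul]
  set W : B := b * (↑t⁻¹ : B) with hW
  have hWu : IsUnit W := hbu.mul t⁻¹.isUnit
  have hstarW : star W = (↑t⁻¹ : B) * star b := by rw [hW, star_mul, hstar_inv]
  have htt : (↑t : B) * (↑t : B) = s := by rw [htc]; exact CFC.sqrt_mul_sqrt_self s hs0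
  have hWW : star W * W = 1 := by
    rw [hstarW, hW]
    calc (↑t⁻¹ : B) * star b * (b * (↑t⁻¹ : B))
        = (↑t⁻¹ : B) * (star b * b) * (↑t⁻¹ : B) := by simp only [mul_assoc]
      _ = (↑t⁻¹ : B) * ((↑t : B) * (↑t : B)) * (↑t⁻¹ : B) := by rw [← hs, htt]
      _ = ((↑t⁻¹ : B) * (↑t : B)) * ((↑t : B) * (↑t⁻¹ : B)) := by simp only [mul_assoc]
      _ = 1 := by rw [t.inv_mul, t.mul_inv, one_mul]
  have hWW' : W * star W = 1 := by
    have h2 : star W = ↑hWu.unit⁻¹ := by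
      calc star W = star W * (W * ↑hWu.unit⁻¹) := by rw [hWu.mul_val_inv, mul_one]
        _ = (star W * W) * ↑hWu.unit⁻¹ := by simp only [hW, mul_assoc]
        _ = ↑hWu.unit⁻¹ := by rw [hWW, one_mul]
    rw [h2, hWu.mul_val_inv]
  have hWmem : W ∈ unitary B := Unitary.mem_iff.mpr ⟨hWW, hWW'⟩
  refine ⟨W, hWmem, ?_⟩
  have hnormW : ‖W‖ = 1 := by
    have := CStarRing.norm_star_mul_self (x := W)
    rw [hWW, norm_one] at this
    nlinarith [norm_nonneg W]
  set p : B := CFC.sqrt (star q * q) with hp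
  have heq : q - W * p = W * (star W * q - p) := by
    rw [mul_sub, ← mul_assoc, hWW', one_mul]
  have hWb : star W * b = (↑t : B) := by
    rw [hstarW]
    calc (↑t⁻¹ : B) * star b * b = (↑t⁻¹ : B) * ((↑t : B) * (↑t : B)) := by
          rw [mul_assoc, ← hs, htt]
      _ = ((↑t⁻¹ : B) * (↑t : B)) * (↑t : B) := by rw [mul_assoc]
      _ = (↑t : B) := by rw [t.inv_mul, one_mul]
  have hqb : ‖q - b‖ ≤ ε := by rwa [norm_sub_rev]
  have hsq : ‖s - star q * q‖ ≤ ε * (2 * ‖q‖ + ε) := by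
    have hdecomp : s - star q * q = star b * (b - q) + (star b - star q) * q := by
      rw [hs]; noncomm_ring
    have hb_norm : ‖b‖ ≤ ‖q‖ + ε := by
      calc ‖b‖ = ‖(b - q) + q‖ := by congr 1; abel
        _ ≤ ‖b - q‖ + ‖q‖ := norm_add_le _ _
        _ ≤ ε + ‖q‖ := by linarith
        _ = ‖q‖ + ε := by ring
    calc ‖s - star q * q‖ ≤ ‖star b * (b - q)‖ + ‖(star b - star q) * q‖ := by
          rw [hdecomp]; exact norm_add_le _ _
      _ ≤ ‖star b‖ * ‖b - q‖ + ‖star b - star q‖ * ‖q‖ := by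
          gcongr <;> exact norm_mul_le _ _
      _ = ‖b‖ * ‖b - q‖ + ‖b - q‖ * ‖q‖ := by
          rw [norm_star, ← star_sub, norm_star]
      _ ≤ (‖q‖ + ε) * ε + ε * ‖q‖ := by
          gcongr <;> first | exact hb_norm | exact hqb | exact norm_nonneg _ | positivity
      _ = ε * (2 * ‖q‖ + ε) := by ring
  have hsqrt_diff : ‖(↑t : B) - p‖ ≤ 3 * Real.sqrt (ε * (2 * ‖q‖ + ε)) := by
    rw [htc, hp]
    calc ‖CFC.sqrt s - CFC.sqrt (star q * q)‖ ≤ 3 * Real.sqrt ‖s - star q * q‖ :=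
          myNormSqrtSub hs0 (star_mul_self_nonneg q)
      _ ≤ 3 * Real.sqrt (ε * (2 * ‖q‖ + ε)) := by
          have := Real.sqrt_le_sqrt hsq
          linarith
  calc ‖q - W * p‖ = ‖W * (star W * q - p)‖ := by rw [heq]
    _ ≤ ‖W‖ * ‖star W * q - p‖ := norm_mul_le _ _
    _ = ‖star W * q - p‖ := by rw [hnormW, one_mul]
    _ = ‖star W * (q - b) + ((↑t : B) - p)‖ := by
        congr 1
        rw [mul_sub, hWb]; abel
    _ ≤ ‖star W * (q - b)‖ + ‖(↑t : B) - p‖ := norm_add_le _ _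
    _ ≤ ‖star W‖ * ‖q - b‖ + ‖(↑t : B) - p‖ := by gcongr; exact norm_mul_le _ _
    _ ≤ 1 * ε + 3 * Real.sqrt (ε * (2 * ‖q‖ + ε)) := by
        have h1 : ‖star W‖ * ‖q - b‖ ≤ 1 * ε := by
          rw [norm_star, hnormW]
          nlinarith [norm_nonneg (q - b)]
        linarith [hsqrt_diff]
    _ = ε + 3 * Real.sqrt (ε * (2 * ‖q‖ + ε)) := by ring

end Aux

set_option maxHeartbeats 2000000 in
theorem polar_isometry_approx_by_unitaries_of_stableRankOne
    {M : Type*} [CStarAlgebra M] [PartialOrder M] [StarOrderedRing M]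
    (A : NonUnitalStarSubalgebra ℂ M) (hAclosed : IsClosed (A : Set M))
    (hsr1 : Dense {u : Unitization ℂ A | IsUnit u})
    (x : M) (hx : x ∈ A) (V : M)
    (hpolar : x = V * CFC.sqrt (star x * x))
    (hsupp : star V * V * CFC.sqrt (star x * x) = CFC.sqrt (star x * x))
    (hV : V * star V * V = V)
    (δ : ℝ) (hδ : 0 < δ) :
    (∃ W : Unitization ℂ A, W ∈ unitary (Unitization ℂ A) ∧
      ‖V * CFC.sqrt (star x * x) -
        (W.fst • (1 : M) + (W.snd : M)) * CFC.sqrt (star x * x)‖ < δ) ∧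
    ∀ F : Finset M,
      (∀ y ∈ F, y ∈ closure {z : M | ∃ c : M,
          z = CFC.sqrt (star x * x) * c * CFC.sqrt (star x * x)}) →
      ∃ W : Unitization ℂ A, W ∈ unitary (Unitization ℂ A) ∧ ∀ y ∈ F,
        ‖V * y * star V - (W.fst • (1 : M) + (W.snd : M)) * y *
          star (W.fst • (1 : M) + (W.snd : M))‖ < δ := by
  letI : CompleteSpace A := hAclosed.completeSpace_coe
  set φ : Unitization ℂ A →⋆ₐ[ℂ] M :=
    Unitization.starLift (NonUnitalStarSubalgebraClass.subtype A) with hφdef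
  have hφ_apply : ∀ z : Unitization ℂ A, φ z = z.fst • (1 : M) + (z.snd : M) := by
    intro z
    simp [hφdef, Unitization.starLift, Algebra.algebraMap_eq_smul_one]
  have hφ_le : ∀ z : Unitization ℂ A, ‖φ z‖ ≤ ‖z‖ := fun z =>
    NonUnitalStarAlgHom.norm_apply_le φ z
  have hφ_sqrt : ∀ z : Unitization ℂ A, 0 ≤ z → φ (CFC.sqrt z) = CFC.sqrt (φ z) := by
    intro z hz
    have hw : CFC.sqrt (CFC.sqrt z) * CFC.sqrt (CFC.sqrt z) = CFC.sqrt z :=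
      CFC.sqrt_mul_sqrt_self _ (CFC.sqrt_nonneg _)
    have hnn : (0:M) ≤ φ (CFC.sqrt z) := by
      have : φ (CFC.sqrt z) = star (φ (CFC.sqrt (CFC.sqrt z))) * φ (CFC.sqrt (CFC.sqrt z)) := by
        rw [← map_star, ← map_mul,
          (IsSelfAdjoint.of_nonneg (CFC.sqrt_nonneg (a := CFC.sqrt z))).star_eq, hw]
      rw [this]
      exact star_mul_self_nonneg _
    have hsq : φ (CFC.sqrt z) * φ (CFC.sqrt z) = φ z := by
      rw [← map_mul, CFC.sqrt_mul_sqrt_self z hz]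
    exact (CFC.sqrt_unique hsq hnn).symm
  set q : Unitization ℂ A := ((⟨x, hx⟩ : A) : Unitization ℂ A) with hq
  have hφq : φ q = x := by
    rw [hφ_apply]
    simp [hq]
  have hφqq : φ (star q * q) = star x * x := by
    rw [map_mul, map_star, hφq]
  have part1 : ∀ δ' : ℝ, 0 < δ' → ∃ W : Unitization ℂ A, W ∈ unitary (Unitization ℂ A) ∧
      ‖x - φ W * CFC.sqrt (star x * x)‖ < δ' := by
    intro δ' hδ'
    set K : ℝ := 2 * ‖q‖ + 1 with hK
    have hK0 : 0 < K := by positivity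
    set ε : ℝ := min 1 (min (δ' / 2) ((δ' / 8) ^ 2 / K)) with hε
    have hε0 : 0 < ε := by
      apply lt_min (by norm_num)
      exact lt_min (by positivity) (by positivity)
    have hε1 : ε ≤ 1 := min_le_left _ _
    have hε2 : ε ≤ δ' / 2 := le_trans (min_le_right _ _) (min_le_left _ _)
    have hε3 : ε ≤ (δ' / 8) ^ 2 / K := le_trans (min_le_right _ _) (min_le_right _ _)
    obtain ⟨b, hb1, hb2⟩ := Metric.dense_iff.mp hsr1 q ε hε0
    have hbq : ‖b - q‖ ≤ ε := by
      rw [← dist_eq_norm]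
      exact le_of_lt (Metric.mem_ball.mp hb1)
    obtain ⟨W, hWmem, hWest⟩ := myApprox q b hb2 ε hε0 hbq
    refine ⟨W, hWmem, ?_⟩
    have hbound : ε + 3 * Real.sqrt (ε * (2 * ‖q‖ + ε)) < δ' := by
      have h1 : ε * (2 * ‖q‖ + ε) ≤ (δ' / 8) ^ 2 := by
        calc ε * (2 * ‖q‖ + ε) ≤ ε * K := by
              apply mul_le_mul_of_nonneg_left _ hε0.le
              rw [hK]; linarith
          _ ≤ ((δ' / 8) ^ 2 / K) * K := by
              exact mul_le_mul_of_nonneg_right hε3 hK0.le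
          _ = (δ' / 8) ^ 2 := by field_simp
      have h2 : Real.sqrt (ε * (2 * ‖q‖ + ε)) ≤ δ' / 8 := by
        calc Real.sqrt (ε * (2 * ‖q‖ + ε)) ≤ Real.sqrt ((δ' / 8) ^ 2) :=
              Real.sqrt_le_sqrt h1
          _ = δ' / 8 := Real.sqrt_sq (by positivity)
      linarith
    have htrans : ‖x - φ W * CFC.sqrt (star x * x)‖ ≤ ‖q - W * CFC.sqrt (star q * q)‖ := by
      have : φ (q - W * CFC.sqrt (star q * q)) = x - φ W * CFC.sqrt (star x * x) := by
        rw [map_sub, map_mul, hφq, hφ_sqrt _ (star_mul_self_nonneg q), hφqq]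
      rw [← this]
      exact hφ_le _
    exact lt_of_le_of_lt (htrans.trans hWest) hbound
  constructor
  · obtain ⟨W, hWmem, hWest⟩ := part1 δ hδ
    refine ⟨W, hWmem, ?_⟩
    rw [← hpolar, ← hφ_apply]
    exact hWest
  · intro F hF
    rcases F.eq_empty_or_nonempty with rfl | hne
    · exact ⟨1, one_mem _, fun y hy => absurd hy (by simp)⟩
    set p : M := CFC.sqrt (star x * x) with hp
    have hp0 : (0:M) ≤ p := (CFC.sqrt_nonneg _)
    have hpsa : IsSelfAdjoint p := IsSelfAdjoint.of_nonneg hp0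
    set R : ℝ := ‖p‖ with hR
    have hR0 : 0 ≤ R := norm_nonneg _
    have hchoice : ∀ y ∈ F, ∃ cc : M, ‖y - p * cc * p‖ < δ / 6 := by
      intro y hy
      obtain ⟨z, hzS, hzd⟩ := Metric.mem_closure_iff.mp (hF y hy) (δ / 6) (by positivity)
      obtain ⟨cc, rfl⟩ := hzS
      exact ⟨cc, by rw [← dist_eq_norm]; exact hzd⟩
    choose! c hc using hchoice
    set C : ℝ := F.sup' hne (fun y => ‖c y‖) with hC
    have hCy : ∀ y ∈ F, ‖c y‖ ≤ C := fun y hy => by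
      rw [hC]; exact Finset.le_sup' (fun y => ‖c y‖) hy
    have hC0 : 0 ≤ C := le_trans (norm_nonneg _) (hCy _ hne.choose_spec)
    set δ' : ℝ := δ / (3 * (C * R + 1)) with hδ'def
    have hδ'0 : 0 < δ' := by positivity
    obtain ⟨W, hWmem, hWest⟩ := part1 δ' hδ'0
    set w : M := φ W with hw
    have hw1 : ‖w‖ ≤ 1 := by
      refine (hφ_le W).trans ?_
      have h1 : star W * W = 1 := hWmem.1
      have := CStarRing.norm_star_mul_self (x := W)
      rw [h1, norm_one] at this
      nlinarith [norm_nonneg W]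
    have hV1 : ‖V‖ ≤ 1 := by
      have he : (star V * V) * (star V * V) = star V * V := by
        calc (star V * V) * (star V * V) = star V * (V * star V * V) := by
              simp only [mul_assoc]
          _ = star V * V := by rw [hV]
      have hsa : star (star V * V) = star V * V := by
        rw [star_mul, star_star]
      have h2 : ‖star V * V‖ * ‖star V * V‖ = ‖star V * V‖ := by
        conv_lhs => rw [← CStarRing.norm_star_mul_self (x := star V * V)]
        rw [hsa, he]
      have h3 : ‖star V * V‖ ≤ 1 := by nlinarith [norm_nonneg (star V * V)]
      have h4 := CStarRing.norm_star_mul_self (x := V)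
      nlinarith [norm_nonneg V]
    have hVp : V * p = x := hpolar.symm
    have hkey : ‖V * p - w * p‖ < δ' := by
      rw [hVp]
      exact hWest
    refine ⟨W, hWmem, ?_⟩
    intro y hy
    rw [← hφ_apply, ← hw]
    set z : M := p * c y * p with hz
    have hyz : ‖y - z‖ < δ / 6 := hc y hy
    have hcyC : ‖c y‖ ≤ C := hCy y hy
    have hsplit : V * y * star V - w * y * star w =
        V * (y - z) * star V + (V * z * star V - w * z * star w) + w * (z - y) * star w := by
      noncomm_ring
    have hmid : V * z * star V - w * z * star w =
        (V * p - w * p) * (c y * (p * star V)) + (w * p) * (c y * (p * star V - p * star w)) := by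
      rw [hz]
      noncomm_ring
    have hstar1 : p * star V - p * star w = star (V * p - w * p) := by
      rw [star_sub, star_mul, star_mul, hpsa.star_eq]
    have hT1 : ‖V * (y - z) * star V‖ ≤ ‖y - z‖ := by
      calc ‖V * (y - z) * star V‖ ≤ ‖V * (y - z)‖ * ‖star V‖ := norm_mul_le _ _
        _ ≤ (‖V‖ * ‖y - z‖) * ‖star V‖ := by
            gcongr
            exact norm_mul_le _ _
        _ ≤ ‖y - z‖ := by
            rw [norm_star]
            calc ‖V‖ * ‖y - z‖ * ‖V‖ ≤ 1 * ‖y - z‖ * 1 := by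
                  gcongr <;> exact hV1
              _ = ‖y - z‖ := by ring
    have hT3 : ‖w * (z - y) * star w‖ ≤ ‖y - z‖ := by
      calc ‖w * (z - y) * star w‖ ≤ ‖w * (z - y)‖ * ‖star w‖ := norm_mul_le _ _
        _ ≤ (‖w‖ * ‖z - y‖) * ‖star w‖ := by
            gcongr
            exact norm_mul_le _ _
        _ ≤ ‖z - y‖ := by
            rw [norm_star]
            calc ‖w‖ * ‖z - y‖ * ‖w‖ ≤ 1 * ‖z - y‖ * 1 := by
                  gcongr <;> exact hw1
              _ = ‖z - y‖ := by ring
        _ = ‖y - z‖ := norm_sub_rev _ _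
    have hT2 : ‖V * z * star V - w * z * star w‖ ≤ 2 * (δ' * (C * R)) := by
      rw [hmid]
      have e1 : ‖(V * p - w * p) * (c y * (p * star V))‖ ≤ δ' * (C * R) := by
        calc ‖(V * p - w * p) * (c y * (p * star V))‖
            ≤ ‖V * p - w * p‖ * ‖c y * (p * star V)‖ := norm_mul_le _ _
          _ ≤ ‖V * p - w * p‖ * (‖c y‖ * (‖p‖ * ‖star V‖)) := by
              gcongr
              calc ‖c y * (p * star V)‖ ≤ ‖c y‖ * ‖p * star V‖ := norm_mul_le _ _
                _ ≤ ‖c y‖ * (‖p‖ * ‖star V‖) := by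
                    gcongr
                    exact norm_mul_le _ _
          _ ≤ δ' * (C * R) := by
              rw [norm_star]
              calc ‖V * p - w * p‖ * (‖c y‖ * (‖p‖ * ‖V‖))
                  ≤ δ' * (C * (R * 1)) := by
                    gcongr <;> first | exact hkey.le | exact hcyC | exact hV1 | exact le_rfl
                _ = δ' * (C * R) := by ring
      have e2 : ‖(w * p) * (c y * (p * star V - p * star w))‖ ≤ δ' * (C * R) := by
        calc ‖(w * p) * (c y * (p * star V - p * star w))‖
            ≤ ‖w * p‖ * ‖c y * (p * star V - p * star w)‖ := norm_mul_le _ _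
          _ ≤ (‖w‖ * ‖p‖) * (‖c y‖ * ‖p * star V - p * star w‖) := by
              gcongr
              · exact norm_mul_le _ _
              · exact norm_mul_le _ _
          _ ≤ δ' * (C * R) := by
              rw [hstar1, norm_star]
              calc ‖w‖ * ‖p‖ * (‖c y‖ * ‖V * p - w * p‖)
                  ≤ 1 * R * (C * δ') := by
                    gcongr <;> first | exact hw1 | exact hcyC | exact hkey.le | exact le_rfl
                _ = δ' * (C * R) := by ring
      calc ‖(V * p - w * p) * (c y * (p * star V)) +
            (w * p) * (c y * (p * star V - p * star w))‖
          ≤ ‖(V * p - w * p) * (c y * (p * star V))‖ +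
            ‖(w * p) * (c y * (p * star V - p * star w))‖ := norm_add_le _ _
        _ ≤ 2 * (δ' * (C * R)) := by linarith
    have hδ'CR : 2 * (δ' * (C * R)) ≤ 2 * δ / 3 := by
      have h0 : (0:ℝ) < C * R + 1 := by positivity
      have h1 : δ' * (C * R + 1) = δ / 3 := by
        rw [hδ'def]; field_simp
      have h1' : δ' * (C * R) + δ' = δ / 3 := by rw [← h1]; ring
      linarith
    calc ‖V * y * star V - w * y * star w‖
        ≤ ‖V * (y - z) * star V‖ + ‖V * z * star V - w * z * star w‖ +
          ‖w * (z - y) * star w‖ := by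
          rw [hsplit]
          exact (norm_add_le _ _).trans (by gcongr; exact norm_add_le _ _)
      _ < δ := by linarith
end
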